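/- arXiv:1504.07030 — 10 statements merged into one kernel-verified Lean document; each statement's English description precedes it below -/
import Mathlib

section
/- Let X be a topological space and let X₁, …, Xₙ (n > 1) be closed subsets covering X such that Xᵢ ∩ Xⱼ = ∅ whenever |i − j| > 1. If x ∈ X₁ \ X₂ and y ∈ Xₙ \ Xₙ₋₁, then any walk x = z₀ ∼ z₁ ∼ … ∼ z_m = y in the inseparability graph (zᵢ ∼ zᵢ₊₁ meaning zᵢ and zᵢ₊₁ cannot be separated by disjoint open sets) has length m ≥ n. -/
/-!
Each point lies in one or two consecutive members of the chain, and inseparable points, being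
unseparated by the open complements of the finitely many closed sets missing them, share a member.
So the index of a member containing the current point rises by at most one per step. The first
step is forced to stay in `C 0`, since `x` lies in no other member, and hence after `k ≥ 1` steps
the walk is in some `C j` with `j < k`. At the end, `y` lies only in `C (n - 1)`, so `n - 1 < m`.
-/

open Filter Topology

/-- Inseparability relation: x and y cannot be separated by disjoint open sets. -/
def Insep {X : Type*} [TopologicalSpace X] (x y : X) : Prop :=
  ∀ U V : Set X, IsOpen U → IsOpen V → x ∈ U → y ∈ V → (U ∩ V).Nonempty

section

variable {X : Type*} [TopologicalSpace X]

theorem Insep.not_disjoint_nhds {x y : X} (h : Insep x y) : ¬Disjoint (𝓝 x) (𝓝 y) := by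
  rw [(nhds_basis_opens x).disjoint_iff (nhds_basis_opens y)]
  rintro ⟨U, ⟨hxU, hU⟩, V, ⟨hyV, hV⟩, hUV⟩
  exact (h U V hU hV hxU hyV).not_disjoint hUV

theorem Insep.exists_mem_and_mem {ι : Type*} {s : Set ι} (hs : s.Finite) {C : ι → Set X}
    (hclosed : ∀ i ∈ s, IsClosed (C i)) (hcover : ∀ w, ∃ i ∈ s, w ∈ C i) {a b : X}
    (h : Insep a b) : ∃ i ∈ s, a ∈ C i ∧ b ∈ C i := by
  have near : ∀ c, ∀ᶠ w in 𝓝 c, ∀ i ∈ s, w ∈ C i → c ∈ C i := fun c =>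
    hs.eventually_all.2 fun i hi => by
      by_cases hc : c ∈ C i
      · exact Eventually.of_forall fun _ _ => hc
      · exact ((hclosed i hi).isOpen_compl.eventually_mem hc).mono fun _ hw hwi => absurd hwi hw
  obtain ⟨w, hwa, hwb⟩ :
      ∃ w, (∀ i ∈ s, w ∈ C i → a ∈ C i) ∧ ∀ i ∈ s, w ∈ C i → b ∈ C i := by
    by_contra hne
    exact h.not_disjoint_nhds <| Filter.disjoint_iff.2
      ⟨_, near a, _, near b, Set.disjoint_left.2 fun w hwa hwb => hne ⟨w, hwa, hwb⟩⟩
  obtain ⟨i, hi, hw⟩ := hcover w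
  exact ⟨i, hi, hwa i hi hw, hwb i hi hw⟩

structure IsClosedChain (n : ℕ) (C : ℕ → Set X) : Prop where
  isClosed : ∀ i < n, IsClosed (C i)
  cover : ∀ x, ∃ i < n, x ∈ C i
  disjoint : ∀ i < n, ∀ j < n, (i + 1 < j ∨ j + 1 < i) → Disjoint (C i) (C j)

namespace IsClosedChain

variable {n : ℕ} {C : ℕ → Set X}

theorem le_succ_of_mem (hC : IsClosedChain n C) {w : X} {i j : ℕ} (hi : i < n) (hj : j < n)
    (hwi : w ∈ C i) (hwj : w ∈ C j) : j ≤ i + 1 := by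
  by_contra! hlt
  exact Set.disjoint_left.1 (hC.disjoint i hi j hj (.inl hlt)) hwi hwj

theorem exists_common_mem_of_insep (hC : IsClosedChain n C) {a b : X} (h : Insep a b) :
    ∃ j < n, a ∈ C j ∧ b ∈ C j :=
  h.exists_mem_and_mem (Set.finite_Iio n) hC.isClosed hC.cover

theorem exists_mem_le_succ_of_insep (hC : IsClosedChain n C) {a b : X} {i : ℕ} (hi : i < n)
    (ha : a ∈ C i) (h : Insep a b) : ∃ j < n, b ∈ C j ∧ j ≤ i + 1 := by
  obtain ⟨j, hj, haj, hbj⟩ := hC.exists_common_mem_of_insep h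
  exact ⟨j, hj, hbj, hC.le_succ_of_mem hi hj ha haj⟩

theorem mem_zero_of_insep (hC : IsClosedChain n C) {a b : X} (ha : a ∈ C 0 \ C 1)
    (h : Insep a b) : b ∈ C 0 := by
  obtain ⟨j, hj, haj, hbj⟩ := hC.exists_common_mem_of_insep h
  have hj1 : j ≤ 0 + 1 := hC.le_succ_of_mem (by omega) hj ha.1 haj
  have hj1' : j ≠ 1 := fun h => ha.2 (h ▸ haj)
  obtain rfl : j = 0 := by omega
  exact hbj

theorem exists_mem_lt_of_walk (hC : IsClosedChain n C) {m : ℕ} {z : ℕ → X}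
    (hz0 : z 0 ∈ C 0 \ C 1) (hwalk : ∀ i < m, Insep (z i) (z (i + 1)))
    {k : ℕ} (hk : 1 ≤ k) (hkm : k ≤ m) : ∃ j < n, z k ∈ C j ∧ j < k := by
  induction k, hk using Nat.le_induction with
  | base =>
    obtain ⟨i, hi, -⟩ := hC.cover (z 0)
    exact ⟨0, by omega, hC.mem_zero_of_insep hz0 (hwalk 0 hkm), Nat.one_pos⟩
  | succ k hk ih =>
    obtain ⟨i, hi, hzi, hik⟩ := ih (by omega)
    obtain ⟨j, hj, hzj, hji⟩ := hC.exists_mem_le_succ_of_insep hi hzi (hwalk k (by omega))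
    exact ⟨j, hj, hzj, by omega⟩

end IsClosedChain

end

/-- Any walk in the inseparability graph from one end of a chain of length `n`
to the other has length at least `n`.  The chain is indexed `C 0, …, C (n-1)`. -/
theorem walk_length_ge_chain_length {X : Type*} [TopologicalSpace X]
    (n : ℕ) (hn : 1 < n) (C : ℕ → Set X)
    (hclosed : ∀ i < n, IsClosed (C i))
    (hcover : ∀ x : X, ∃ i < n, x ∈ C i)
    (hdisj : ∀ i < n, ∀ j < n, (i + 1 < j ∨ j + 1 < i) → Disjoint (C i) (C j))
    (x y : X) (hx : x ∈ C 0 \ C 1) (hy : y ∈ C (n - 1) \ C (n - 2))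
    (m : ℕ) (z : ℕ → X) (hz0 : z 0 = x) (hzm : z m = y)
    (hwalk : ∀ i < m, Insep (z i) (z (i + 1))) :
    n ≤ m := by
  have hC : IsClosedChain n C := ⟨hclosed, hcover, hdisj⟩
  subst hz0 hzm
  obtain rfl | hm := Nat.eq_zero_or_pos m
  · have : n - 1 ≤ 0 + 1 := hC.le_succ_of_mem (by omega) (by omega) hx.1 hy.1
    have hn1 : n - 1 = 1 := by omega
    rw [hn1] at hy
    exact absurd hy.1 hx.2
  obtain ⟨j, hj, hzj, hjm⟩ := hC.exists_mem_lt_of_walk hx hwalk hm le_rfl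
  have : n - 1 ≤ j + 1 := hC.le_succ_of_mem hj (by omega) hzj hy.1
  have : j ≠ n - 2 := fun h => hy.2 (h ▸ hzj)
  omega
end

section
/- Let X be a topological space with a closed, relatively discrete subset Y such that every point of X \ Y is ∼-related only to itself (i.e., Y contains all points belonging to non-singleton ∼-components). Then for every closed subset C of X, the set C¹ = {x ∈ X : x ∈ C or x ∼ c for some c ∈ C} is closed in X. -/
/-!
Every point of `C¹` outside `Y` is `∼`-related only to itself, so it already lies in `C`.
Hence `C¹ = C ∪ (C¹ ∩ Y)`, and the second part is closed because every subset of a closed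
discrete subspace is closed.
-/

open Set

theorem IsClosed.of_subset_of_discreteTopology {X : Type*} [TopologicalSpace X] {Y S : Set X}
    (hY : IsClosed Y) [DiscreteTopology Y] (hS : S ⊆ Y) : IsClosed S := by
  rw [← inter_eq_right.2 hS, ← Subtype.image_preimage_coe]
  exact hY.isClosedEmbedding_subtypeVal.isClosedMap _ (isClosed_discrete _)

theorem Set.eq_union_inter_of_subset_union {α : Type*} {s t u : Set α}
    (hst : s ⊆ t) (htu : t ⊆ s ∪ u) : t = s ∪ t ∩ u :=
  Subset.antisymm (fun _ hx => (htu hx).imp id (⟨hx, ·⟩)) (union_subset hst inter_subset_left)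

/-- If `Y` is a closed relatively discrete subset containing all points belonging to
non-singleton ∼-components, then `C¹` is closed for every closed `C`. -/
theorem oneStep_closed {X : Type*} [TopologicalSpace X]
    (Y : Set X) (hYc : IsClosed Y) (hYd : DiscreteTopology Y)
    (hsing : ∀ x ∉ Y, ∀ y : X, Insep x y → y = x)
    (C : Set X) (hC : IsClosed C) :
    IsClosed {x : X | x ∈ C ∨ ∃ c ∈ C, Insep x c} := by
  set C₁ := {x : X | x ∈ C ∨ ∃ c ∈ C, Insep x c}
  have hC₁ : C₁ ⊆ C ∪ Y := by
    rintro x (hx | ⟨c, hc, hxc⟩)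
    · exact Or.inl hx
    · by_cases hxY : x ∈ Y
      · exact Or.inr hxY
      · exact Or.inl (hsing x hxY c hxc ▸ hc)
  rw [eq_union_inter_of_subset_union (t := C₁) (fun _ => Or.inl) hC₁]
  exact hC.union (hYc.of_subset_of_discreteTopology inter_subset_right)
end

section
/- Let Y and Z be compact subsets of a topological space X such that every point of Y is separated from every point of Z and from every point ∼-related to a point of Z, and symmetrically (i.e., the graph distance d(Y,Z) in the inseparability graph is at least 2). Then there exist disjoint open sets U and V with Y ⊆ U and Z ⊆ V. -/
open Filter Topology

theorem not_insep_iff_disjoint_nhds {X : Type*} [TopologicalSpace X] {x y : X} :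
    ¬ Insep x y ↔ Disjoint (𝓝 x) (𝓝 y) := by
  simp only [(nhds_basis_opens x).disjoint_iff (nhds_basis_opens y), Insep, not_forall,
    Set.not_nonempty_iff_eq_empty, ← Set.disjoint_iff_inter_eq_empty]
  aesop

theorem IsCompact.disjoint_nhdsSet_of_forall_not_insep {X : Type*} [TopologicalSpace X]
    {Y Z : Set X} (hY : IsCompact Y) (hZ : IsCompact Z)
    (h : ∀ y ∈ Y, ∀ z ∈ Z, ¬ Insep y z) : Disjoint (𝓝ˢ Y) (𝓝ˢ Z) := by
  rw [hY.disjoint_nhdsSet_left]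
  intro y hy
  rw [hZ.disjoint_nhdsSet_right]
  exact fun z hz ↦ not_insep_iff_disjoint_nhds.1 (h y hy z hz)

/-- Compact sets at ∼-graph distance at least 2 can be separated by disjoint open sets. -/
theorem compact_dist_ge_two_separated {X : Type*} [TopologicalSpace X]
    (Y Z : Set X) (hY : IsCompact Y) (hZ : IsCompact Z)
    (hd : ∀ y ∈ Y, ∀ z ∈ Z, ¬ Insep y z ∧ ¬ ∃ w : X, Insep y w ∧ Insep w z) :
    ∃ U V : Set X, IsOpen U ∧ IsOpen V ∧ Disjoint U V ∧ Y ⊆ U ∧ Z ⊆ V := by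
  have hYZ := hY.disjoint_nhdsSet_of_forall_not_insep hZ fun y hy z hz ↦ (hd y hy z hz).1
  obtain ⟨U, V, hU, hV, hYU, hZV, hUV⟩ := separatedNhds_iff_disjoint.2 hYZ
  exact ⟨U, V, hU, hV, hUV, hYU, hZV⟩
end

section
/- Let k ≥ 2. Define a graph on the set S = {(m₁,…,m_k) ∈ ℤ^k : m₁ ≥ m₂ ≥ … ≥ m_{k−1} ≥ |m_k|}, where two signatures m and m' are adjacent iff there exists (q₁,…,q_{k−1}) ∈ ℤ^{k−1} with m₁ ≥ q₁ ≥ m₂ ≥ q₂ ≥ … ≥ q_{k−1} ≥ |m_k| and m'₁ ≥ q₁ ≥ m'₂ ≥ q₂ ≥ … ≥ q_{k−1} ≥ |m'_k|. Then the graph distance between any two elements of S is at most k. -/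
/-- A signature of `SO(2k)`: integers `m 0 ≥ m 1 ≥ … ≥ m (k-2) ≥ |m (k-1)|`
(indices `0,…,k-1`; entries of `m` beyond `k-1` are irrelevant). -/
def SigD (k : ℕ) (m : ℕ → ℤ) : Prop :=
  (∀ i, i + 3 ≤ k → m (i + 1) ≤ m i) ∧ |m (k - 1)| ≤ m (k - 2)

/-- `q` interlaces `m`: `m i ≥ q i ≥ |m (i+1)|` for `i = 0,…,k-2`. -/
def InterD (k : ℕ) (m q : ℕ → ℤ) : Prop :=
  ∀ i, i + 2 ≤ k → q i ≤ m i ∧ |m (i + 1)| ≤ q i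

/-- Two `SO(2k)`-signatures are adjacent iff they admit a common interlacing tuple. -/
def AdjD (k : ℕ) (m m' : ℕ → ℤ) : Prop :=
  ∃ q : ℕ → ℤ, InterD k m q ∧ InterD k m' q

namespace SOdiamAux

/-- Absolute value of entries, cut off to `0` beyond index `k-1`. -/
def mhat (k : ℕ) (m : ℕ → ℤ) (j : ℕ) : ℤ := if j < k then |m j| else 0

variable {k : ℕ} {m m' : ℕ → ℤ}

lemma sig_le (hm : SigD k m) : ∀ j' j, j ≤ j' → j' + 2 ≤ k → m j' ≤ m j := by
  intro j'
  induction j' with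
  | zero =>
    intro j h _
    have : j = 0 := by omega
    subst this; exact le_refl _
  | succ n ih =>
    intro j h h2
    by_cases hj : j = n + 1
    · subst hj; exact le_refl _
    · exact le_trans (hm.1 n (by omega)) (ih j (by omega) (by omega))

lemma sig_nonneg (hk : 2 ≤ k) (hm : SigD k m) {j : ℕ} (hj : j + 2 ≤ k) : 0 ≤ m j := by
  have h1 := hm.2
  have h2 : m (k - 2) ≤ m j := sig_le hm (k - 2) j (by omega) (by omega)
  have h3 := abs_nonneg (m (k - 1))
  linarith

lemma sig_abs (hk : 2 ≤ k) (hm : SigD k m) {i : ℕ} (hi : i + 2 ≤ k) :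
    |m (i + 1)| ≤ m i := by
  rcases eq_or_lt_of_le hi with h | h
  · have e1 : k - 1 = i + 1 := by omega
    have e2 : k - 2 = i := by omega
    have h2 := hm.2
    rwa [e1, e2] at h2
  · rw [abs_of_nonneg (sig_nonneg hk hm (by omega : (i + 1) + 2 ≤ k))]
    exact hm.1 i (by omega)

lemma mhat_nonneg (k : ℕ) (m : ℕ → ℤ) (j : ℕ) : 0 ≤ mhat k m j := by
  unfold mhat; split
  · exact abs_nonneg _
  · exact le_refl _

lemma mhat_step (hk : 2 ≤ k) (hm : SigD k m) (j : ℕ) :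
    mhat k m (j + 1) ≤ mhat k m j := by
  unfold mhat
  split_ifs with h1 h2 h2
  · exact le_trans (sig_abs hk hm (by omega)) (le_abs_self _)
  · omega
  · exact abs_nonneg _
  · exact le_refl _

lemma mhat_le (hk : 2 ≤ k) (hm : SigD k m) :
    ∀ j' j, j ≤ j' → mhat k m j' ≤ mhat k m j := by
  intro j'
  induction j' with
  | zero =>
    intro j h
    have : j = 0 := by omega
    subst this; exact le_refl _
  | succ n ih =>
    intro j h
    by_cases hj : j = n + 1
    · subst hj; exact le_refl _
    · exact le_trans (mhat_step hk hm n) (ih j (by omega))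

lemma mhat_eq {j : ℕ} (m : ℕ → ℤ) (h : j < k) : mhat k m j = |m j| := if_pos h

lemma mhat_zero' {j : ℕ} (m : ℕ → ℤ) (h : k ≤ j) : mhat k m j = 0 := if_neg (by omega)

lemma mhat_key (hk : 2 ≤ k) (hm : SigD k m) {i : ℕ} (hi : i + 2 ≤ k) :
    mhat k m (i + 2) ≤ m i := by
  by_cases h : i + 2 < k
  · rw [mhat_eq m h]
    calc |m (i + 2)| ≤ m (i + 1) := sig_abs hk hm (by omega)
      _ ≤ m i := hm.1 i (by omega)
  · rw [mhat_zero' m (by omega)]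
    exact sig_nonneg hk hm hi

/-- The path from `m` to `m'`. -/
def zpath (k : ℕ) (m m' : ℕ → ℤ) (t : ℕ) : ℕ → ℤ :=
  if t = 0 then m
  else if t < k then (fun i => max (mhat k m (i + t)) (mhat k m' (i + (k - t))))
  else m'

lemma zpath_zero : zpath k m m' 0 = m := by simp [zpath]

lemma zpath_last (hk : 2 ≤ k) : zpath k m m' k = m' := by
  have h1 : k ≠ 0 := by omega
  simp [zpath, h1]

lemma zpath_mid {t : ℕ} (h1 : t ≠ 0) (h2 : t < k) :
    zpath k m m' t = fun i => max (mhat k m (i + t)) (mhat k m' (i + (k - t))) := by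
  simp [zpath, h1, h2]

lemma zpath_mid_nonneg {t : ℕ} (h1 : t ≠ 0) (h2 : t < k) (i : ℕ) :
    0 ≤ zpath k m m' t i := by
  rw [zpath_mid h1 h2]
  exact le_trans (mhat_nonneg k m (i + t)) (le_max_left _ _)

lemma zpath_mid_anti (hk : 2 ≤ k) (hm : SigD k m) (hm' : SigD k m')
    {t : ℕ} (h1 : t ≠ 0) (h2 : t < k) {i j : ℕ} (hij : i ≤ j) :
    zpath k m m' t j ≤ zpath k m m' t i := by
  rw [zpath_mid h1 h2]
  exact max_le_max (mhat_le hk hm _ _ (by omega)) (mhat_le hk hm' _ _ (by omega))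

lemma zpath_sig (hk : 2 ≤ k) (hm : SigD k m) (hm' : SigD k m')
    {t : ℕ} (ht : t ≤ k) : SigD k (zpath k m m' t) := by
  by_cases h0 : t = 0
  · subst h0; rw [zpath_zero]; exact hm
  · by_cases h1 : t < k
    · constructor
      · intro i _
        exact zpath_mid_anti hk hm hm' h0 h1 (by omega)
      · rw [abs_of_nonneg (zpath_mid_nonneg h0 h1 _)]
        exact zpath_mid_anti hk hm hm' h0 h1 (by omega)
    · have : t = k := by omega
      subst this; rw [zpath_last hk]; exact hm'

lemma zpath_own (hk : 2 ≤ k) (hm : SigD k m) (hm' : SigD k m')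
    {t : ℕ} (ht : t ≤ k) {i : ℕ} (hi : i + 2 ≤ k) :
    |zpath k m m' t (i + 1)| ≤ zpath k m m' t i := by
  exact sig_abs hk (zpath_sig hk hm hm' ht) hi

lemma zpath_cross1 (hk : 2 ≤ k) (hm : SigD k m) (hm' : SigD k m')
    {t : ℕ} (ht : t < k) {i : ℕ} (hi : i + 2 ≤ k) :
    |zpath k m m' t (i + 1)| ≤ zpath k m m' (t + 1) i := by
  by_cases h0 : t = 0
  · -- a = m, b = zpath 1 (mid since 1 < k)
    subst h0
    rw [zpath_zero, zpath_mid (by omega : (0:ℕ)+1 ≠ 0) (by omega : 0+1 < k)]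
    have e : |m (i + 1)| = mhat k m (i + (0 + 1)) := by
      rw [mhat_eq m (show i + (0 + 1) < k by omega)]
    rw [e]
    exact le_max_left _ _
  · by_cases h1 : t + 1 = k
    · -- b = m'
      have hkt : k - t = 1 := by omega
      rw [zpath_mid h0 ht, show zpath k m m' (t+1) = m' by rw [h1]; exact zpath_last hk]
      rw [abs_of_nonneg (le_trans (mhat_nonneg k m _) (le_max_left _ _))]
      apply max_le
      · rw [mhat_zero' m (show k ≤ i + 1 + t by omega)]
        exact sig_nonneg hk hm' hi
      · rw [hkt]
        have e : i + 1 + 1 = i + 2 := by omega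
        rw [e]
        exact mhat_key hk hm' hi
    · -- both mid
      rw [zpath_mid h0 ht, zpath_mid (by omega : t + 1 ≠ 0) (by omega : t + 1 < k)]
      rw [abs_of_nonneg (le_trans (mhat_nonneg k m _) (le_max_left _ _))]
      exact max_le_max (mhat_le hk hm _ _ (by omega)) (mhat_le hk hm' _ _ (by omega))

lemma zpath_cross2 (hk : 2 ≤ k) (hm : SigD k m) (hm' : SigD k m')
    {t : ℕ} (ht : t < k) {i : ℕ} (hi : i + 2 ≤ k) :
    |zpath k m m' (t + 1) (i + 1)| ≤ zpath k m m' t i := by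
  by_cases h0 : t = 0
  · subst h0
    rw [zpath_zero, zpath_mid (by omega : (0:ℕ)+1 ≠ 0) (by omega : 0+1 < k)]
    rw [abs_of_nonneg (le_trans (mhat_nonneg k m _) (le_max_left _ _))]
    apply max_le
    · have e : i + 1 + (0 + 1) = i + 2 := by omega
      rw [e]
      exact mhat_key hk hm hi
    · rw [mhat_zero' m' (show k ≤ i + 1 + (k - (0 + 1)) by omega)]
      exact sig_nonneg hk hm hi
  · by_cases h1 : t + 1 = k
    · have hkt : k - t = 1 := by omega
      rw [zpath_mid h0 ht, show zpath k m m' (t+1) = m' by rw [h1]; exact zpath_last hk]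
      have e : |m' (i + 1)| = mhat k m' (i + (k - t)) := by
        rw [hkt, mhat_eq m' (show i + 1 < k by omega)]
      rw [e]
      exact le_max_right _ _
    · rw [zpath_mid h0 ht, zpath_mid (by omega : t + 1 ≠ 0) (by omega : t + 1 < k)]
      rw [abs_of_nonneg (le_trans (mhat_nonneg k m _) (le_max_left _ _))]
      exact max_le_max (mhat_le hk hm _ _ (by omega)) (mhat_le hk hm' _ _ (by omega))

lemma zpath_adj (hk : 2 ≤ k) (hm : SigD k m) (hm' : SigD k m')
    {t : ℕ} (ht : t < k) :
    AdjD k (zpath k m m' t) (zpath k m m' (t + 1)) := by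
  refine ⟨fun i => max |zpath k m m' t (i + 1)| |zpath k m m' (t + 1) (i + 1)|,
    fun i hi => ⟨?_, le_max_left _ _⟩, fun i hi => ⟨?_, le_max_right _ _⟩⟩
  · exact max_le (zpath_own hk hm hm' (by omega) hi) (zpath_cross2 hk hm hm' ht hi)
  · exact max_le (zpath_cross1 hk hm hm' ht hi) (zpath_own hk hm hm' (by omega) hi)

end SOdiamAux

/-- The graph distance between any two `SO(2k)`-signatures is at most `k`. -/
theorem so_even_diam_le (k : ℕ) (hk : 2 ≤ k) (m m' : ℕ → ℤ)
    (hm : SigD k m) (hm' : SigD k m') :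
    ∃ L ≤ k, ∃ z : ℕ → ℕ → ℤ, z 0 = m ∧ z L = m' ∧
      (∀ i ≤ L, SigD k (z i)) ∧ (∀ i < L, AdjD k (z i) (z (i + 1))) := by
  refine ⟨k, le_refl k, SOdiamAux.zpath k m m', SOdiamAux.zpath_zero,
    SOdiamAux.zpath_last hk, fun i hi => SOdiamAux.zpath_sig hk hm hm' hi,
    fun i hi => SOdiamAux.zpath_adj hk hm hm' hi⟩
end

section
/- Let k ≥ 2. With the adjacency on signatures (m₁,…,m_k) ∈ ℤ^k, m₁ ≥ … ≥ m_{k−1} ≥ |m_k|, given by existence of a common interlacing tuple (q₁,…,q_{k−1}) (with mᵢ ≥ qᵢ ≥ |mᵢ₊₁| for both signatures), the graph distance between (0,0,…,0) and (1,1,…,1) is at least k. -/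
open Set

theorem AdjD.eq_zero_succ {k i : ℕ} {m m' : ℕ → ℤ} (h : AdjD k m m') (hi : i + 2 ≤ k)
    (hm : m i = 0) : m' (i + 1) = 0 := by
  obtain ⟨q, hmq, hm'q⟩ := h
  have hq : q i = 0 :=
    le_antisymm ((hmq i hi).1.trans hm.le) ((abs_nonneg _).trans (hmq i hi).2)
  exact abs_nonpos_iff.mp (hq ▸ (hm'q i hi).2)

theorem AdjD.eqOn_zero_Ico_succ {k i : ℕ} {m m' : ℕ → ℤ} (h : AdjD k m m')
    (hm : EqOn m 0 (Ico i k)) : EqOn m' 0 (Ico (i + 1) k) := by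
  rintro j ⟨hij, hjk⟩
  obtain ⟨j, rfl⟩ : ∃ j', j = j' + 1 := ⟨j - 1, by omega⟩
  exact h.eq_zero_succ (by omega) (hm ⟨by omega, by omega⟩)

theorem eqOn_zero_Ico_of_adjD_walk {k L : ℕ} {z : ℕ → ℕ → ℤ} (h0 : z 0 = 0)
    (hadj : ∀ i < L, AdjD k (z i) (z (i + 1))) : ∀ n ≤ L, EqOn (z n) 0 (Ico n k)
  | 0, _ => h0 ▸ eqOn_refl _ _
  | n + 1, hn =>
    (hadj n hn).eqOn_zero_Ico_succ (eqOn_zero_Ico_of_adjD_walk h0 hadj n (by omega))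

theorem so_even_dist_zero_one_ge_general (k : ℕ)
    (L : ℕ) (z : ℕ → ℕ → ℤ)
    (h0 : z 0 = fun _ => (0 : ℤ)) (hL : z L = fun _ => (1 : ℤ))
    (hadj : ∀ i < L, AdjD k (z i) (z (i + 1))) :
    k ≤ L := by
  by_contra! hLk
  have hlast := eqOn_zero_Ico_of_adjD_walk h0 hadj L le_rfl
    (show k - 1 ∈ Ico L k from ⟨by omega, by omega⟩)
  simp [hL] at hlast

/-- Any walk of `SO(2k)`-signatures from `(0,…,0)` to `(1,…,1)` has length at least `k`. -/
theorem so_even_dist_zero_one_ge (k : ℕ) (hk : 2 ≤ k)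
    (L : ℕ) (z : ℕ → ℕ → ℤ)
    (h0 : z 0 = fun _ => (0 : ℤ)) (hL : z L = fun _ => (1 : ℤ))
    (hsig : ∀ i ≤ L, SigD k (z i))
    (hadj : ∀ i < L, AdjD k (z i) (z (i + 1))) :
    k ≤ L :=
  so_even_dist_zero_one_ge_general k L z h0 hL hadj
end

section
/- Let k ≥ 2. Define a graph on the set S = {(m₁,…,m_k) ∈ ℤ^k : m₁ ≥ m₂ ≥ … ≥ m_k ≥ 0}, where m and m' are adjacent iff there exists (p₁,…,p_k) ∈ ℤ^k with m₁ ≥ p₁ ≥ m₂ ≥ p₂ ≥ … ≥ m_k ≥ p_k ≥ −m_k and m'₁ ≥ p₁ ≥ m'₂ ≥ … ≥ m'_k ≥ p_k ≥ −m'_k. Then the graph distance between any two elements of S is at most k, and the distance between (0,…,0) and (1,…,1) is exactly k. -/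
/-- A signature of `SO(2k+1)`: integers `m 0 ≥ m 1 ≥ … ≥ m (k-1) ≥ 0`. -/
def SigB (k : ℕ) (m : ℕ → ℤ) : Prop :=
  (∀ i, i + 2 ≤ k → m (i + 1) ≤ m i) ∧ 0 ≤ m (k - 1)

/-- `p` interlaces `m`: `m i ≥ p i ≥ m (i+1)` for `i < k-1` and `m (k-1) ≥ p (k-1) ≥ -m (k-1)`. -/
def InterB (k : ℕ) (m p : ℕ → ℤ) : Prop :=
  (∀ i, i + 2 ≤ k → p i ≤ m i ∧ m (i + 1) ≤ p i) ∧
    p (k - 1) ≤ m (k - 1) ∧ -(m (k - 1)) ≤ p (k - 1)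

/-- Two `SO(2k+1)`-signatures are adjacent iff they admit a common interlacing tuple. -/
def AdjB (k : ℕ) (m m' : ℕ → ℤ) : Prop :=
  ∃ p : ℕ → ℤ, InterB k m p ∧ InterB k m' p

/-! The upper bound is an explicit walk: at step `t` take the entrywise maximum of `m` shifted
left by `t` and `m'` shifted right by `k - t` (both padded with zeros beyond index `k`).
Consecutive such tuples interlace a common tuple, the maximum of their own left shifts.

For the lower bound, a common interlacing tuple `p` of adjacent `m`, `m'` gives
`m' (i + 1) ≤ p i ≤ m i`; so along a walk a positive entry moves at most one index per step, and
the entry `1` at index `k - 1` needs `k` steps to come from the zero tuple. -/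

open Set

def zeroExtend (k : ℕ) (m : ℕ → ℤ) (i : ℕ) : ℤ := if i < k then m i else 0

section Congr

variable {k : ℕ} {x y : ℕ → ℤ}

theorem SigB.congr (hk : 1 ≤ k) (h : EqOn x y (Iio k)) (hy : SigB k y) : SigB k x := by
  refine ⟨fun i hi => ?_, ?_⟩
  · rw [h (show i < k by omega), h (show i + 1 < k by omega)]
    exact hy.1 i hi
  · rw [h (show k - 1 < k by omega)]
    exact hy.2

theorem InterB.congr (hk : 1 ≤ k) {p : ℕ → ℤ} (h : EqOn x y (Iio k)) (hy : InterB k y p) :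
    InterB k x p := by
  have hlast : x (k - 1) = y (k - 1) := h (show k - 1 < k by omega)
  refine ⟨fun i hi => ?_, hlast ▸ hy.2.1, hlast ▸ hy.2.2⟩
  rw [h (show i < k by omega), h (show i + 1 < k by omega)]
  exact hy.1 i hi

theorem AdjB.congr (hk : 1 ≤ k) {x' y' : ℕ → ℤ} (hx : EqOn x x' (Iio k))
    (hy : EqOn y y' (Iio k)) (h : AdjB k x' y') : AdjB k x y :=
  let ⟨p, hxp, hyp⟩ := h
  ⟨p, hxp.congr hk hx, hyp.congr hk hy⟩

theorem AdjB.le_of_add_two_le (h : AdjB k x y) {i : ℕ} (hi : i + 2 ≤ k) : y (i + 1) ≤ x i :=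
  let ⟨_, hxp, hyp⟩ := h
  ((hyp.1 i hi).2).trans (hxp.1 i hi).1

end Congr

section Zero

variable {k : ℕ} {m : ℕ → ℤ}

theorem SigB.antitone_zeroExtend (hm : SigB k m) : Antitone (zeroExtend k m) := by
  refine antitone_nat_of_succ_le fun j => ?_
  unfold zeroExtend
  rcases lt_trichotomy (j + 1) k with h | h | h
  · rw [if_pos h, if_pos (by omega)]
    exact hm.1 j (by omega)
  · rw [if_neg (by omega), if_pos (by omega), show j = k - 1 by omega]
    exact hm.2
  · rw [if_neg (by omega), if_neg (by omega)]

theorem SigB.zeroExtend_nonneg (hm : SigB k m) : 0 ≤ zeroExtend k m := fun i => by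
  simpa [zeroExtend] using hm.antitone_zeroExtend (Nat.le_add_right i k)

theorem SigB.nonneg (hm : SigB k m) {j : ℕ} (hj : j < k) : 0 ≤ m j := by
  simpa [zeroExtend, hj] using hm.zeroExtend_nonneg j

end Zero

section Interlace

variable {k : ℕ} {x y : ℕ → ℤ}

theorem SigB.of_antitone (hx : Antitone x) (hx0 : 0 ≤ x) : SigB k x :=
  ⟨fun i _ => hx (Nat.le_succ i), hx0 _⟩

theorem interB_max_succ (hx : Antitone x) (hx0 : 0 ≤ x)
    (hyx : ∀ i, y (i + 1) ≤ x i) : InterB k x (fun i => max (x (i + 1)) (y (i + 1))) := by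
  refine ⟨fun i _ => ⟨max_le (hx (Nat.le_succ i)) (hyx i), le_max_left _ _⟩, ?_, ?_⟩
  · exact max_le (hx (Nat.le_succ _)) (hyx _)
  · exact (neg_nonpos.mpr (hx0 _)).trans ((hx0 _).trans (le_max_left _ _))

theorem adjB_of_interlace (hx : Antitone x) (hy : Antitone y) (hx0 : 0 ≤ x)
    (hy0 : 0 ≤ y) (hxy : ∀ i, x (i + 1) ≤ y i) (hyx : ∀ i, y (i + 1) ≤ x i) : AdjB k x y :=
  ⟨_, interB_max_succ hx hx0 hyx, by simpa only [max_comm] using interB_max_succ hy hy0 hxy⟩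

end Interlace

section Sweep

def sweep (f g : ℕ → ℤ) (k t : ℕ) (j : ℕ) : ℤ := max (f (j + t)) (g (j + (k - t)))

variable {f g : ℕ → ℤ} {k : ℕ}

theorem antitone_sweep (hf : Antitone f) (hg : Antitone g) (t : ℕ) : Antitone (sweep f g k t) :=
  fun _ _ hij => max_le_max (hf (by omega)) (hg (by omega))

theorem sweep_nonneg (hf0 : 0 ≤ f) (t : ℕ) : 0 ≤ sweep f g k t :=
  fun j => (hf0 (j + t)).trans (le_max_left _ _)

theorem adjB_sweep_succ (hf : Antitone f) (hg : Antitone g) (hf0 : 0 ≤ f)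
    {t : ℕ} (ht : t < k) : AdjB k (sweep f g k t) (sweep f g k (t + 1)) :=
  adjB_of_interlace (antitone_sweep hf hg t) (antitone_sweep hf hg (t + 1))
    (sweep_nonneg hf0 t) (sweep_nonneg hf0 (t + 1))
    (fun _ => max_le_max (hf (by omega)) (hg (by omega)))
    (fun _ => max_le_max (hf (by omega)) (hg (by omega)))

end Sweep

section Walk

variable {k : ℕ}

theorem exists_walk_of_eqOn (hk : 1 ≤ k) {L : ℕ} (hL : L ≠ 0) {m m' : ℕ → ℤ}
    {w : ℕ → ℕ → ℤ} (h0 : EqOn m (w 0) (Iio k)) (hL' : EqOn m' (w L) (Iio k))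
    (hsig : ∀ i ≤ L, SigB k (w i)) (hadj : ∀ i < L, AdjB k (w i) (w (i + 1))) :
    ∃ z : ℕ → ℕ → ℤ, z 0 = m ∧ z L = m' ∧
      (∀ i ≤ L, SigB k (z i)) ∧ (∀ i < L, AdjB k (z i) (z (i + 1))) := by
  set z := Function.update (Function.update w 0 m) L m'
  have hz : ∀ i, EqOn (z i) (w i) (Iio k) := by
    intro i
    by_cases hiL : i = L
    · subst hiL; simpa [z] using hL'
    by_cases hi0 : i = 0
    · subst hi0; simpa [z, Ne.symm hL] using h0
    · simp [z, hiL, hi0, EqOn]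
  refine ⟨z, by simp [z, Ne.symm hL], by simp [z], fun i hi => (hsig i hi).congr hk (hz i),
    fun i hi => (hadj i hi).congr hk (hz i) (hz (i + 1))⟩

theorem exists_walk_of_sigB (hk : 1 ≤ k) {m m' : ℕ → ℤ} (hm : SigB k m) (hm' : SigB k m') :
    ∃ z : ℕ → ℕ → ℤ, z 0 = m ∧ z k = m' ∧
      (∀ i ≤ k, SigB k (z i)) ∧ (∀ i < k, AdjB k (z i) (z (i + 1))) := by
  set w := sweep (zeroExtend k m) (zeroExtend k m') k
  have hf := hm.antitone_zeroExtend
  have hg := hm'.antitone_zeroExtend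
  have h0 : EqOn m (w 0) (Iio k) := fun j hj => by
    simp only [mem_Iio] at hj
    simp [w, sweep, zeroExtend, hj, hm.nonneg hj]
  have hk' : EqOn m' (w k) (Iio k) := fun j hj => by
    simp only [mem_Iio] at hj
    simp [w, sweep, zeroExtend, hj, hm'.nonneg hj]
  exact exists_walk_of_eqOn hk (by omega) h0 hk'
    (fun i _ => .of_antitone (antitone_sweep hf hg i) (sweep_nonneg hm.zeroExtend_nonneg i))
    (fun i hi => adjB_sweep_succ hf hg hm.zeroExtend_nonneg hi)

theorem apply_add_le_of_walk {L : ℕ} {z : ℕ → ℕ → ℤ} (hadj : ∀ i < L, AdjB k (z i) (z (i + 1))) :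
    ∀ t ≤ L, ∀ j, j + t < k → z t (j + t) ≤ z 0 j := by
  intro t
  induction t with
  | zero => simp
  | succ t ih =>
    intro ht j hj
    calc z (t + 1) (j + (t + 1)) ≤ z t (j + t) :=
          (hadj t ht).le_of_add_two_le (i := j + t) (by omega)
      _ ≤ z 0 j := ih (by omega) j (by omega)

end Walk

/-- In the interlacing graph on `SO(2k+1)`-signatures, any two signatures are at
distance at most `k`, and the distance from `(0,…,0)` to `(1,…,1)` is exactly `k`. -/
theorem so_odd_diam (k : ℕ) (hk : 2 ≤ k) :
    (∀ m m' : ℕ → ℤ, SigB k m → SigB k m' →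
      ∃ L ≤ k, ∃ z : ℕ → ℕ → ℤ, z 0 = m ∧ z L = m' ∧
        (∀ i ≤ L, SigB k (z i)) ∧ (∀ i < L, AdjB k (z i) (z (i + 1)))) ∧
    (∀ (L : ℕ) (z : ℕ → ℕ → ℤ), z 0 = (fun _ => (0 : ℤ)) → z L = (fun _ => (1 : ℤ)) →
      (∀ i ≤ L, SigB k (z i)) → (∀ i < L, AdjB k (z i) (z (i + 1))) → k ≤ L) := by
  refine ⟨fun m m' hm hm' => ⟨k, le_rfl, exists_walk_of_sigB (by omega) hm hm'⟩, ?_⟩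
  intro L z hz0 hzL _ hadj
  by_contra! hL
  have h := apply_add_le_of_walk hadj L le_rfl (k - 1 - L) (by omega)
  rw [show k - 1 - L + L = k - 1 by omega, hzL, hz0] at h
  norm_num at h
end

section
/- For k = 2r even, in the interlacing graph on SO(2k)-signatures, every signature (m₁,…,m_k) is connected by a walk of length at most r to the signature (s₁,…,s_r, 0,…,0) for suitable s₁ ≥ … ≥ s_r ≥ 0; explicitly, for any target values sⱼ ≥ mⱼ, the signature (s₁,…,s_i, m_i, m_{i+1},…,m_{k−1−i}, 0,…,0) is adjacent to (s₁,…,s_{i+1}, m_{i+1},…,m_{k−2−i}, 0,…,0) for each 0 ≤ i ≤ r−1. -/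
lemma antitoneOn_Iic_of_succ_le {α : Type*} [Preorder α] {f : ℕ → α} {n : ℕ}
    (hf : ∀ i, i + 1 ≤ n → f (i + 1) ≤ f i) : AntitoneOn f (Set.Iic n) :=
  antitoneOn_of_succ_le Set.ordConnected_Iic fun i _ _ hi ↦ hf i hi

lemma nonneg_of_antitoneOn_Iic {α : Type*} [Preorder α] [Zero α] {f : ℕ → α} {n t : ℕ}
    (hf : AntitoneOn f (Set.Iic n)) (h0 : 0 ≤ f n) (ht : t ≤ n) : 0 ≤ f t :=
  h0.trans (hf ht Set.self_mem_Iic ht)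

lemma adjD_of_max_abs_succ_le_min {k : ℕ} {m m' : ℕ → ℤ}
    (h : ∀ t, t + 2 ≤ k → max |m (t + 1)| |m' (t + 1)| ≤ min (m t) (m' t)) :
    AdjD k m m' :=
  ⟨fun t ↦ max |m (t + 1)| |m' (t + 1)|,
    fun t ht ↦ ⟨(h t ht).trans (min_le_left _ _), le_max_left _ _⟩,
    fun t ht ↦ ⟨(h t ht).trans (min_le_right _ _), le_max_right _ _⟩⟩

namespace SigD

variable {k : ℕ} {m : ℕ → ℤ}

lemma antitoneOn (hm : SigD k m) : AntitoneOn m (Set.Iic (k - 2)) :=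
  antitoneOn_Iic_of_succ_le fun i hi ↦ hm.1 i (by omega)

lemma nonneg (hm : SigD k m) {t : ℕ} (ht : t ≤ k - 2) : 0 ≤ m t :=
  nonneg_of_antitoneOn_Iic hm.antitoneOn ((abs_nonneg _).trans hm.2) ht

lemma abs_succ_le (hm : SigD k m) {t : ℕ} (ht : t + 2 ≤ k) : |m (t + 1)| ≤ m t := by
  rcases Nat.lt_or_ge (t + 2) k with hlt | hge
  · rw [abs_of_nonneg (hm.nonneg (by omega))]
    exact hm.1 t hlt
  · obtain rfl : t = k - 2 := by omega
    rw [show k - 2 + 1 = k - 1 by omega]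
    exact hm.2

end SigD

def soWalk (k : ℕ) (m s : ℕ → ℤ) (i t : ℕ) : ℤ :=
  if t < i then s t else if t + i ≤ k - 1 then m t else 0

section soWalk

variable {k r i j t : ℕ} {m s : ℕ → ℤ}

lemma soWalk_of_lt (h : t < i) : soWalk k m s i t = s t :=
  if_pos h

lemma soWalk_of_le_of_add_le (h₁ : i ≤ t) (h₂ : t + i ≤ k - 1) :
    soWalk k m s i t = m t := by
  rw [soWalk, if_neg (by omega), if_pos h₂]

lemma soWalk_of_le_of_lt_add (h₁ : i ≤ t) (h₂ : k - 1 < t + i) : soWalk k m s i t = 0 := by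
  rw [soWalk, if_neg (by omega), if_neg (by omega)]

lemma soWalk_nonneg (hm : SigD k m) (hs : AntitoneOn s (Set.Iic (r - 1))) (hs0 : 0 ≤ s (r - 1))
    (hi : i ≤ r) (ht : t + 2 ≤ k) : 0 ≤ soWalk k m s i t := by
  unfold soWalk
  split_ifs with h₁ h₂
  · exact nonneg_of_antitoneOn_Iic hs hs0 (by omega)
  · exact hm.nonneg (by omega)
  · exact le_rfl

lemma le_soWalk (hsm : ∀ j, j < r → m j ≤ s j) (hi : i ≤ r) (h : t + i ≤ k - 1) :
    m t ≤ soWalk k m s i t := by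
  unfold soWalk
  split_ifs with h₁
  · exact hsm t (by omega)
  · exact le_rfl

lemma abs_soWalk_succ_le (hm : SigD k m) (hs : AntitoneOn s (Set.Iic (r - 1)))
    (hs0 : 0 ≤ s (r - 1)) (hsm : ∀ j, j < r → m j ≤ s j) (hi : i ≤ r) (hj : j ≤ r)
    (hij : i ≤ j + 1) (hji : j ≤ i + 1) (ht : t + 2 ≤ k) :
    |soWalk k m s j (t + 1)| ≤ soWalk k m s i t := by
  by_cases h₁ : t + 1 < j
  · rw [soWalk_of_lt h₁, soWalk_of_lt (by omega),
      abs_of_nonneg (nonneg_of_antitoneOn_Iic hs hs0 (by omega))]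
    exact hs (Set.mem_Iic.2 (by omega)) (Set.mem_Iic.2 (by omega)) (by omega)
  by_cases h₂ : t + 1 + j ≤ k - 1
  · rw [soWalk_of_le_of_add_le (by omega) h₂]
    exact (hm.abs_succ_le ht).trans (le_soWalk hsm hi (by omega))
  · rw [soWalk_of_le_of_lt_add (by omega) (by omega), abs_zero]
    exact soWalk_nonneg hm hs hs0 hi ht

lemma adjD_soWalk_succ (hm : SigD k m) (hs : AntitoneOn s (Set.Iic (r - 1)))
    (hs0 : 0 ≤ s (r - 1)) (hsm : ∀ j, j < r → m j ≤ s j) (hi : i < r) :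
    AdjD k (soWalk k m s i) (soWalk k m s (i + 1)) := by
  have key {a b : ℕ} (ha : a = i ∨ a = i + 1) (hb : b = i ∨ b = i + 1) (t : ℕ)
      (ht : t + 2 ≤ k) : |soWalk k m s b (t + 1)| ≤ soWalk k m s a t :=
    abs_soWalk_succ_le hm hs hs0 hsm (by omega) (by omega) (by omega) (by omega) ht
  exact adjD_of_max_abs_succ_le_min fun t ht ↦
    max_le (le_min (key (.inl rfl) (.inl rfl) t ht) (key (.inr rfl) (.inl rfl) t ht))
      (le_min (key (.inl rfl) (.inr rfl) t ht) (key (.inr rfl) (.inr rfl) t ht))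

end soWalk

theorem so_even_walk_to_targets_general (r : ℕ) (k : ℕ) (hk : k = 2 * r)
    (m s : ℕ → ℤ) (hm : SigD k m)
    (hs : ∀ j, j + 1 < r → s (j + 1) ≤ s j) (hs0 : 0 ≤ s (r - 1))
    (hsm : ∀ j, j < r → m j ≤ s j) :
    ∃ z : ℕ → ℕ → ℤ,
      (∀ i, i ≤ r → ∀ t, z i t = if t < i then s t else if t + i ≤ k - 1 then m t else 0) ∧
      (∀ t, t < k → z 0 t = m t) ∧
      (∀ t, t < r → z r t = s t) ∧ (∀ t, r ≤ t → t < k → z r t = 0) ∧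
      (∀ i, i < r → AdjD k (z i) (z (i + 1))) := by
  have hs' : AntitoneOn s (Set.Iic (r - 1)) :=
    antitoneOn_Iic_of_succ_le fun j hj ↦ hs j (by omega)
  exact ⟨soWalk k m s, fun _ _ _ ↦ rfl,
    fun _ ht ↦ soWalk_of_le_of_add_le (Nat.zero_le _) (by omega),
    fun _ ht ↦ soWalk_of_lt ht,
    fun _ h₁ h₂ ↦ soWalk_of_le_of_lt_add h₁ (by omega),
    fun _ hi ↦ adjD_soWalk_succ hm hs' hs0 hsm hi⟩

/-- For `k = 2r`, every `SO(2k)`-signature `m` is joined by a walk of length `r`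
to `(s 0, …, s (r-1), 0, …, 0)`, for any decreasing nonnegative targets `s j ≥ m j`;
the `i`-th vertex of the walk is `(s 0, …, s (i-1), m i, …, m (k-1-i), 0, …, 0)`. -/
theorem so_even_walk_to_targets (r : ℕ) (hr : 1 ≤ r) (k : ℕ) (hk : k = 2 * r)
    (m s : ℕ → ℤ) (hm : SigD k m)
    (hs : ∀ j, j + 1 < r → s (j + 1) ≤ s j) (hs0 : 0 ≤ s (r - 1))
    (hsm : ∀ j, j < r → m j ≤ s j) :
    ∃ z : ℕ → ℕ → ℤ,
      (∀ i, i ≤ r → ∀ t, z i t = if t < i then s t else if t + i ≤ k - 1 then m t else 0) ∧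
      (∀ t, t < k → z 0 t = m t) ∧
      (∀ t, t < r → z r t = s t) ∧ (∀ t, r ≤ t → t < k → z r t = 0) ∧
      (∀ i, i < r → AdjD k (z i) (z (i + 1))) :=
  so_even_walk_to_targets_general r k hk m s hm hs hs0 hsm
end

section
/- Let P and M be sets with a relation R ⊆ M × P ('containment'); define I * J for I, J ∈ M iff ∃ P with I R P and J R P, and define P ∼ Q for P, Q ∈ P iff ∃ I ∈ M with I R P and I R Q; assume every P ∈ P has some I with I R P and every I ∈ M has some P with I R P. If I₀ * I₁ * … * I_k is a walk in (M, *) with k ≥ 2, then choosing Pᵢ with I_{i−1} R Pᵢ and Iᵢ R Pᵢ gives a walk P₁ ∼ … ∼ P_k in (P, ∼) of length k − 1; hence d_∼(P₁, P_k) ≤ d_*(I₀, I_k) − 1 when d_*(I₀, I_k) ≥ 2, and symmetrically d_*(I, J) ≤ d_∼(P, Q) + 1 whenever I R P and J R Q. -/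
/-- Combinatorial core of `|Orc(A) - D(A)| ≤ 1`.  `R I p` models `I ⊆ P` for
`I ∈ Sub(A)`, `p ∈ Prim(A)`; `I * J ⟺ ∃ p, R I p ∧ R J p` and
`p ∼ q ⟺ ∃ I, R I p ∧ R I q`.  (a) A `*`-walk `I 0 * … * I k` (`k ≥ 2`) together with
choices `Pw i` witnessing each edge gives a `∼`-walk `Pw 1 ∼ … ∼ Pw k` of length `k-1`;
(b) a `∼`-walk of length `L` from `p` to `q` with `R I p`, `R J q` gives a `*`-walk of
length at most `L + 1` from `I` to `J`. -/
theorem sub_prim_graph_core {M P : Type*} (R : M → P → Prop)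
    (hP : ∀ p : P, ∃ I : M, R I p) (hM : ∀ I : M, ∃ p : P, R I p) :
    (∀ (k : ℕ) (I : ℕ → M) (Pw : ℕ → P), 2 ≤ k →
      (∀ i < k, R (I i) (Pw (i + 1)) ∧ R (I (i + 1)) (Pw (i + 1))) →
      ∀ i, 1 ≤ i → i + 1 ≤ k → ∃ J : M, R J (Pw i) ∧ R J (Pw (i + 1))) ∧
    (∀ (L : ℕ) (I J : M) (z : ℕ → P), R I (z 0) → R J (z L) →
      (∀ i < L, ∃ I' : M, R I' (z i) ∧ R I' (z (i + 1))) →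
      ∃ L' ≤ L + 1, ∃ w : ℕ → M, w 0 = I ∧ w L' = J ∧
        ∀ i < L', ∃ p : P, R (w i) p ∧ R (w (i + 1)) p) := by
  constructor
  · intro k I Pw hk hedge i hi1 hik
    refine ⟨I i, ?_, ?_⟩
    · obtain ⟨i', rfl⟩ : ∃ i', i = i' + 1 := ⟨i - 1, (Nat.succ_pred_eq_of_pos hi1).symm⟩
      exact (hedge i' (by omega)).2
    · exact (hedge i (by omega)).1
  · intro L I J z hI hJ hwalk
    classical
    let f : ℕ → M := fun i => if h : i < L then (hwalk i h).choose else I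
    have hf1 : ∀ i (h : i < L), R (f i) (z i) := fun i h => by
      simp only [f, dif_pos h]; exact (hwalk i h).choose_spec.1
    have hf2 : ∀ i (h : i < L), R (f i) (z (i + 1)) := fun i h => by
      simp only [f, dif_pos h]; exact (hwalk i h).choose_spec.2
    refine ⟨L + 1, le_rfl,
      fun j => if j = 0 then I else if L + 1 ≤ j then J else f (j - 1), ?_, ?_, ?_⟩
    · simp
    · simp
    · intro i hi
      rcases Nat.eq_zero_or_pos i with rfl | hpos
      · refine ⟨z 0, by simp [hI], ?_⟩
        rcases Nat.eq_zero_or_pos L with rfl | hL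
        · simpa using hJ
        · have : ¬ L + 1 ≤ 1 := by omega
          simpa [this] using hf1 0 hL
      · rcases eq_or_lt_of_le (Nat.succ_le_of_lt hi) with hiL | hiL
        · -- i = L
          have hiL' : i = L := by omega
          subst hiL'
          have h1 : i - 1 < i := by omega
          refine ⟨z i, ?_, ?_⟩
          · have : ¬ i + 1 ≤ i := by omega
            simp only [if_neg (by omega : i ≠ 0), if_neg this]
            have := hf2 (i - 1) h1
            have heq : i - 1 + 1 = i := by omega
            rwa [heq] at this
          · simp [hJ]
        · -- 0 < i < L
          have hiL'' : i < L := by omega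
          refine ⟨z i, ?_, ?_⟩
          · have : ¬ L + 1 ≤ i := by omega
            simp only [if_neg (by omega : i ≠ 0), if_neg this]
            have := hf2 (i - 1) (by omega)
            have heq : i - 1 + 1 = i := by omega
            rwa [heq] at this
          · have : ¬ L + 1 ≤ i + 1 := by omega
            simp only [if_neg (by omega : i + 1 ≠ 0), if_neg this]
            exact hf1 i hiL''
end

section
/- Let X be a topological space whose quotient W by the equivalence relation 'finite ∼-distance' (x ⋄ y iff d(x,y) < ∞ in the inseparability graph) is such that the quotient map q : X → W is closed. If for every x ∈ X, every point in the closure of {x} is ∼-related to x, then W with the quotient topology is a T₁ space. -/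
/-- `IsWalk R z L`: `z` is a walk of length `L` in the graph with adjacency `R`. -/
def IsWalk {X : Type*} (R : X → X → Prop) (z : ℕ → X) (L : ℕ) : Prop :=
  ∀ i < L, R (z i) (z (i + 1))

theorem isWalk_pair {X : Type*} {R : X → X → Prop} {x y : X} (h : R x y) :
    IsWalk R (fun i => if i = 0 then x else y) 1 := by
  intro i hi
  obtain rfl : i = 0 := Nat.lt_one_iff.mp hi
  simpa using h

theorem image_closure_singleton_of_forall_eq {X W : Type*} [TopologicalSpace X]
    {q : X → W} {x : X} (h : ∀ y ∈ closure {x}, q y = q x) :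
    q '' closure {x} = {q x} :=
  Set.eq_singleton_iff_unique_mem.mpr
    ⟨⟨x, subset_closure rfl, rfl⟩, by rintro _ ⟨y, hy, rfl⟩; exact h y hy⟩

theorem IsClosedMap.t1Space_of_surjective {X W : Type*} [TopologicalSpace X]
    [TopologicalSpace W] {q : X → W} (hclosed : IsClosedMap q) (hsurj : q.Surjective)
    (h : ∀ x, ∀ y ∈ closure {x}, q y = q x) : T1Space W where
  t1 w := by
    obtain ⟨x, rfl⟩ := hsurj w
    rw [← image_closure_singleton_of_forall_eq (h x)]
    exact hclosed _ isClosed_closure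

/-- If `q` is a closed quotient map whose fibres are the classes of the
finite-∼-distance relation, and every point of `cl{x}` is ∼-related to `x`,
then the quotient is `T₁`. -/
theorem finite_dist_quotient_t1 {X W : Type*} [TopologicalSpace X] [TopologicalSpace W]
    (q : X → W) (hquot : Topology.IsQuotientMap q) (hclosed : IsClosedMap q)
    (hfib : ∀ x y : X, q x = q y ↔
      ∃ L, ∃ z : ℕ → X, z 0 = x ∧ z L = y ∧ IsWalk Insep z L)
    (hcl : ∀ x y : X, y ∈ closure {x} → Insep y x) :
    T1Space W :=
  hclosed.t1Space_of_surjective hquot.surjective fun x y hy =>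
    (hfib y x).mpr ⟨1, _, rfl, rfl, isWalk_pair (hcl x y hy)⟩
end

section
/- Let N ≥ 3 and k = ⌊N/2⌋. In the inseparability graph on the signatures of SO(N) (with adjacency given by existence of a common irreducible constituent upon restriction to SO(N−1), expressed via interlacing inequalities), the diameter of the (connected) graph is exactly k. -/
/-!
Both graphs retract onto partitions with at most `k` parts: a `B`-signature `m` goes to
`(m₀, …, m_{k-1}, 0, 0, …)`, a `D`-signature to `(m₀, …, m_{k-2}, |m_{k-1}|, 0, 0, …)`.
Being a signature, and adjacency of two signatures, can be read off these images, where two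
partitions `λ, μ` share an interlacing tuple iff `λ_{i+1} ≤ μ_i` and `μ_{i+1} ≤ λ_i` for all `i`
(take `max (λ_{i+1}) (μ_{i+1})`). So it suffices to work with partitions.

Upper bound: `t ↦ (max λ_{j+t} μ_{j+k-t})_j`, `t = 0, …, k`, is a walk from `λ` to `μ`.
Lower bound: along a walk `λ⁽⁰⁾, λ⁽¹⁾, …` one has `λ⁽ᵗ⁾_{j+t} ≤ λ⁽⁰⁾_j`, so starting from `0`
the entry of index `k - 1` stays `0` for the first `k - 1` steps.
-/

def IsPartitionSeq (k : ℕ) (f : ℕ → ℤ) : Prop :=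
  Antitone f ∧ ∀ j, k ≤ j → f j = 0

def Interleaved (f g : ℕ → ℤ) : Prop :=
  ∀ i, f (i + 1) ≤ g i ∧ g (i + 1) ≤ f i

def interpolant (k : ℕ) (f g : ℕ → ℤ) (t j : ℕ) : ℤ :=
  max (f (j + t)) (g (j + (k - t)))

section Partitions

variable {k : ℕ} {f g : ℕ → ℤ}

theorem Interleaved.symm (h : Interleaved f g) : Interleaved g f :=
  fun i => (h i).symm

theorem Interleaved.max_succ_le (hf : Antitone f) (h : Interleaved f g) (i : ℕ) :
    max (f (i + 1)) (g (i + 1)) ≤ f i :=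
  max_le (hf (Nat.le_succ i)) (h i).2

theorem IsPartitionSeq.nonneg (hf : IsPartitionSeq k f) (j : ℕ) : 0 ≤ f j :=
  (hf.2 (max j k) (le_max_right j k)).symm.le.trans (hf.1 (le_max_left j k))

theorem IsPartitionSeq.interleaved (hf : IsPartitionSeq k f) (hg : IsPartitionSeq k g)
    (h : ∀ i, i + 2 ≤ k → f (i + 1) ≤ g i ∧ g (i + 1) ≤ f i) : Interleaved f g := by
  intro i
  by_cases hi : i + 2 ≤ k
  · exact h i hi
  · rw [hf.2 (i + 1) (by omega), hg.2 (i + 1) (by omega)]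
    exact ⟨hg.nonneg i, hf.nonneg i⟩

theorem isPartitionSeq_interpolant (hf : IsPartitionSeq k f) (hg : IsPartitionSeq k g) (t : ℕ) :
    IsPartitionSeq k (interpolant k f g t) := by
  refine ⟨antitone_nat_of_succ_le fun j => max_le_max (hf.1 (by omega)) (hg.1 (by omega)),
    fun j hj => ?_⟩
  rw [interpolant, hf.2 _ (by omega), hg.2 _ (by omega), max_self]

theorem interpolant_zero (hf : IsPartitionSeq k f) (hg : IsPartitionSeq k g) :
    interpolant k f g 0 = f := by
  funext j
  rw [interpolant, hg.2 _ (by omega), add_zero]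
  exact max_eq_left (hf.nonneg j)

theorem interpolant_self (hf : IsPartitionSeq k f) (hg : IsPartitionSeq k g) :
    interpolant k f g k = g := by
  funext j
  rw [interpolant, hf.2 _ (by omega), Nat.sub_self, add_zero]
  exact max_eq_right (hg.nonneg j)

theorem interleaved_interpolant {t : ℕ} (hf : Antitone f) (hg : Antitone g) (ht : t < k) :
    Interleaved (interpolant k f g t) (interpolant k f g (t + 1)) := fun i =>
  ⟨max_le_max (hf (by omega)) (hg (by omega)), max_le_max (hf (by omega)) (hg (by omega))⟩

end Partitions

theorem shift_le_of_interleaved {L : ℕ} {F : ℕ → ℕ → ℤ}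
    (hF : ∀ n < L, Interleaved (F n) (F (n + 1))) :
    ∀ t ≤ L, ∀ j, F t (j + t) ≤ F 0 j
  | 0, _, _ => le_rfl
  | t + 1, ht, j => (hF t ht (j + t)).2.trans (shift_le_of_interleaved hF t (by omega) j)

theorem le_of_interleaved {k L : ℕ} {F : ℕ → ℕ → ℤ}
    (hF : ∀ n < L, Interleaved (F n) (F (n + 1))) (h0 : ∀ j, F 0 j ≤ 0)
    (hL : 0 < F L (k - 1)) : k ≤ L := by
  by_contra! hLk
  have := shift_le_of_interleaved hF L le_rfl (k - 1 - L)
  rw [Nat.sub_add_cancel (by omega)] at this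
  linarith [h0 (k - 1 - L)]

section Walks

variable {k : ℕ} {Sig : (ℕ → ℤ) → Prop} {Adj : (ℕ → ℤ) → (ℕ → ℤ) → Prop}
  {part : (ℕ → ℤ) → ℕ → ℤ}

theorem exists_walk_of_retract (hk : 0 < k)
    (hsig : ∀ m, IsPartitionSeq k (part m) ↔ Sig m)
    (hadj : ∀ m m', Sig m → Sig m' → Interleaved (part m) (part m') → Adj m m')
    (hpart : ∀ f, IsPartitionSeq k f → part f = f) {m m' : ℕ → ℤ} (hm : Sig m)
    (hm' : Sig m') :
    ∃ z : ℕ → ℕ → ℤ, z 0 = m ∧ z k = m' ∧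
      (∀ i ≤ k, Sig (z i)) ∧ (∀ i < k, Adj (z i) (z (i + 1))) := by
  have hf := (hsig m).2 hm
  have hg := (hsig m').2 hm'
  -- `part` need not be injective on signatures, so the endpoints are put in by hand
  let z t := if t = 0 then m else if t = k then m' else interpolant k (part m) (part m') t
  have hz : ∀ t, part (z t) = interpolant k (part m) (part m') t := by
    intro t
    obtain rfl | h0 := eq_or_ne t 0
    · simp [z, interpolant_zero hf hg]
    obtain rfl | hkt := eq_or_ne t k
    · simp [z, h0, interpolant_self hf hg]
    · simp only [z, if_neg h0, if_neg hkt]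
      exact hpart _ (isPartitionSeq_interpolant hf hg t)
  have hsig_z : ∀ t, Sig (z t) := fun t => (hsig _).1 (hz t ▸ isPartitionSeq_interpolant hf hg t)
  refine ⟨z, if_pos rfl, by simp [z, hk.ne'], fun i _ => hsig_z i, fun i hi => ?_⟩
  refine hadj _ _ (hsig_z i) (hsig_z (i + 1)) ?_
  rw [hz, hz]
  exact interleaved_interpolant hf.1 hg.1 hi

theorem diam_eq_of_retract (hk : 0 < k)
    (hsig : ∀ m, IsPartitionSeq k (part m) ↔ Sig m)
    (hadj : ∀ m m', Sig m → Sig m' → (Adj m m' ↔ Interleaved (part m) (part m')))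
    (hpart : ∀ f, IsPartitionSeq k f → part f = f) (h0 : ∀ j, part (fun _ => 0) j ≤ 0)
    (h1 : 0 < part (fun _ => 1) (k - 1)) :
    (∀ m m', Sig m → Sig m' → ∃ L ≤ k, ∃ z : ℕ → ℕ → ℤ, z 0 = m ∧ z L = m' ∧
        (∀ i ≤ L, Sig (z i)) ∧ (∀ i < L, Adj (z i) (z (i + 1)))) ∧
      (∀ (L : ℕ) (z : ℕ → ℕ → ℤ), z 0 = (fun _ => 0) → z L = (fun _ => 1) →
        (∀ i ≤ L, Sig (z i)) → (∀ i < L, Adj (z i) (z (i + 1))) → k ≤ L) := by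
  refine ⟨fun m m' hm hm' => ⟨k, le_rfl, exists_walk_of_retract hk hsig
    (fun m m' hm hm' => (hadj m m' hm hm').2) hpart hm hm'⟩, fun L z hz0 hzL hz hadjz => ?_⟩
  refine le_of_interleaved (F := fun n => part (z n))
    (fun n hn => (hadj _ _ (hz n hn.le) (hz _ hn)).1 (hadjz n hn)) ?_ ?_
  · simpa only [hz0] using h0
  · simpa only [hzL] using h1

end Walks

section TypeB

def partB (k : ℕ) (m : ℕ → ℤ) (j : ℕ) : ℤ :=
  if j < k then m j else 0

variable {k j : ℕ} {m m' : ℕ → ℤ}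

theorem partB_of_lt (h : j < k) : partB k m j = m j := if_pos h

theorem partB_of_le (h : k ≤ j) : partB k m j = 0 := if_neg (by omega)

theorem isPartitionSeq_partB_iff (hk : 0 < k) : IsPartitionSeq k (partB k m) ↔ SigB k m := by
  constructor
  · rintro ⟨hanti, -⟩
    refine ⟨fun i hi => ?_, ?_⟩
    · simpa only [partB_of_lt (by omega : i < k), partB_of_lt (by omega : i + 1 < k)]
        using hanti (Nat.le_succ i)
    · simpa only [partB_of_lt (by omega : k - 1 < k), partB_of_le (by omega : k ≤ k - 1 + 1)]
        using hanti (Nat.le_succ (k - 1))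
  · rintro ⟨hstep, hlast⟩
    refine ⟨antitone_nat_of_succ_le fun i => ?_, fun i hi => partB_of_le hi⟩
    rcases lt_trichotomy (i + 1) k with h | h | h
    · rw [partB_of_lt h, partB_of_lt (by omega)]
      exact hstep i h
    · obtain rfl : i = k - 1 := by omega
      rw [partB_of_le (by omega), partB_of_lt (by omega)]
      exact hlast
    · rw [partB_of_le (by omega), partB_of_le (by omega)]

theorem partB_of_isPartitionSeq {f : ℕ → ℤ} (hf : IsPartitionSeq k f) : partB k f = f := by
  funext j
  by_cases hj : j < k
  · exact partB_of_lt hj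
  · rw [partB_of_le (by omega), hf.2 j (by omega)]

theorem interB_max_partB (hk : 0 < k) (hm : SigB k m)
    (h : Interleaved (partB k m) (partB k m')) :
    InterB k m fun i => max (partB k m (i + 1)) (partB k m' (i + 1)) := by
  have hf := (isPartitionSeq_partB_iff hk).2 hm
  have hle : ∀ i, i < k → max (partB k m (i + 1)) (partB k m' (i + 1)) ≤ m i := fun i hi =>
    partB_of_lt (m := m) hi ▸ h.max_succ_le hf.1 i
  refine ⟨fun i hi => ⟨hle i (by omega), ?_⟩, hle (k - 1) (by omega), ?_⟩
  · exact partB_of_lt (m := m) (by omega : i + 1 < k) ▸ le_max_left _ _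
  · exact (neg_nonpos.2 hm.2).trans ((hf.nonneg _).trans (le_max_left _ _))

theorem adjB_iff_interleaved (hk : 0 < k) (hm : SigB k m) (hm' : SigB k m') :
    AdjB k m m' ↔ Interleaved (partB k m) (partB k m') := by
  have hf := (isPartitionSeq_partB_iff hk).2 hm
  have hg := (isPartitionSeq_partB_iff hk).2 hm'
  constructor
  · rintro ⟨p, hp, hp'⟩
    refine hf.interleaved hg fun i hi => ?_
    simp only [partB_of_lt (by omega : i < k), partB_of_lt (by omega : i + 1 < k)]
    exact ⟨(hp.1 i hi).2.trans (hp'.1 i hi).1, (hp'.1 i hi).2.trans (hp.1 i hi).1⟩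
  · intro h
    refine ⟨_, interB_max_partB hk hm h, ?_⟩
    simpa only [max_comm] using interB_max_partB hk hm' h.symm

end TypeB

section TypeD

def partD (k : ℕ) (m : ℕ → ℤ) (j : ℕ) : ℤ :=
  if j + 1 < k then m j else if j + 1 = k then |m j| else 0

variable {k j : ℕ} {m m' : ℕ → ℤ}

theorem partD_of_succ_lt (h : j + 1 < k) : partD k m j = m j := if_pos h

theorem partD_of_succ_eq (h : j + 1 = k) : partD k m j = |m j| := by
  rw [partD, if_neg (by omega), if_pos h]

theorem partD_of_le (h : k ≤ j) : partD k m j = 0 := by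
  rw [partD, if_neg (by omega), if_neg (by omega)]

theorem isPartitionSeq_partD_iff (hk : 2 ≤ k) : IsPartitionSeq k (partD k m) ↔ SigD k m := by
  constructor
  · rintro ⟨hanti, -⟩
    refine ⟨fun i hi => ?_, ?_⟩
    · simpa only [partD_of_succ_lt (by omega : i + 1 < k),
        partD_of_succ_lt (by omega : i + 1 + 1 < k)] using hanti (Nat.le_succ i)
    · have := hanti (by omega : k - 2 ≤ k - 1)
      rwa [partD_of_succ_eq (by omega), partD_of_succ_lt (by omega)] at this
  · rintro ⟨hstep, hlast⟩
    refine ⟨antitone_nat_of_succ_le fun i => ?_, fun i hi => partD_of_le hi⟩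
    rcases lt_trichotomy (i + 2) k with h | h | h
    · rw [partD_of_succ_lt h, partD_of_succ_lt (by omega)]
      exact hstep i h
    · obtain rfl : i = k - 2 := by omega
      rw [partD_of_succ_eq (by omega), partD_of_succ_lt (by omega), show k - 2 + 1 = k - 1 by omega]
      exact hlast
    · rw [partD_of_le (by omega)]
      by_cases hi : i + 1 = k
      · exact (partD_of_succ_eq hi).symm ▸ abs_nonneg _
      · exact (partD_of_le (by omega)).ge

theorem partD_of_isPartitionSeq {f : ℕ → ℤ} (hf : IsPartitionSeq k f) : partD k f = f := by
  funext j
  rcases lt_trichotomy (j + 1) k with h | h | h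
  · exact partD_of_succ_lt h
  · rw [partD_of_succ_eq h, abs_of_nonneg (hf.nonneg j)]
  · rw [partD_of_le (by omega), hf.2 j (by omega)]

theorem partD_eq_abs (hk : 2 ≤ k) (hm : SigD k m) (hj : j < k) : partD k m j = |m j| := by
  by_cases h : j + 1 = k
  · exact partD_of_succ_eq h
  · have := ((isPartitionSeq_partD_iff hk).2 hm).nonneg j
    rw [partD_of_succ_lt (by omega)] at this ⊢
    exact (abs_of_nonneg this).symm

theorem interD_max_partD (hk : 2 ≤ k) (hm : SigD k m)
    (h : Interleaved (partD k m) (partD k m')) :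
    InterD k m fun i => max (partD k m (i + 1)) (partD k m' (i + 1)) := by
  have hf := (isPartitionSeq_partD_iff hk).2 hm
  intro i hi
  exact ⟨partD_of_succ_lt (m := m) (by omega : i + 1 < k) ▸ h.max_succ_le hf.1 i,
    partD_eq_abs hk hm (by omega : i + 1 < k) ▸ le_max_left _ _⟩

theorem adjD_iff_interleaved (hk : 2 ≤ k) (hm : SigD k m) (hm' : SigD k m') :
    AdjD k m m' ↔ Interleaved (partD k m) (partD k m') := by
  have hf := (isPartitionSeq_partD_iff hk).2 hm
  have hg := (isPartitionSeq_partD_iff hk).2 hm'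
  constructor
  · rintro ⟨q, hq, hq'⟩
    refine hf.interleaved hg fun i hi => ?_
    rw [partD_eq_abs hk hm (by omega : i + 1 < k), partD_eq_abs hk hm' (by omega : i + 1 < k),
      partD_of_succ_lt (by omega : i + 1 < k), partD_of_succ_lt (by omega : i + 1 < k)]
    exact ⟨(hq i hi).2.trans (hq' i hi).1, (hq' i hi).2.trans (hq i hi).1⟩
  · intro h
    refine ⟨_, interD_max_partD hk hm h, ?_⟩
    simpa only [max_comm] using interD_max_partD hk hm' h.symm

end TypeD

/-- For `N ≥ 3` and `k = ⌊N/2⌋`, the interlacing graph on `SO(N)`-signatures has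
diameter exactly `k`: every pair of signatures is joined by a walk of length at most
`k`, and any walk from `(0,…,0)` to `(1,…,1)` has length at least `k`. -/
theorem so_diam_eq (N : ℕ) (hN : 3 ≤ N) (k : ℕ) (hk : k = N / 2) :
    (N = 2 * k →
      (∀ m m' : ℕ → ℤ, SigD k m → SigD k m' →
        ∃ L ≤ k, ∃ z : ℕ → ℕ → ℤ, z 0 = m ∧ z L = m' ∧
          (∀ i ≤ L, SigD k (z i)) ∧ (∀ i < L, AdjD k (z i) (z (i + 1)))) ∧
      (∀ (L : ℕ) (z : ℕ → ℕ → ℤ), z 0 = (fun _ => (0 : ℤ)) → z L = (fun _ => (1 : ℤ)) →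
        (∀ i ≤ L, SigD k (z i)) → (∀ i < L, AdjD k (z i) (z (i + 1))) → k ≤ L)) ∧
    (N = 2 * k + 1 →
      (∀ m m' : ℕ → ℤ, SigB k m → SigB k m' →
        ∃ L ≤ k, ∃ z : ℕ → ℕ → ℤ, z 0 = m ∧ z L = m' ∧
          (∀ i ≤ L, SigB k (z i)) ∧ (∀ i < L, AdjB k (z i) (z (i + 1)))) ∧
      (∀ (L : ℕ) (z : ℕ → ℕ → ℤ), z 0 = (fun _ => (0 : ℤ)) → z L = (fun _ => (1 : ℤ)) →
        (∀ i ≤ L, SigB k (z i)) → (∀ i < L, AdjB k (z i) (z (i + 1))) → k ≤ L)) := by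
  refine ⟨fun hN2 => ?_, fun hN2 => ?_⟩
  · have hk2 : 2 ≤ k := by omega
    refine diam_eq_of_retract (by omega) (fun _ => isPartitionSeq_partD_iff hk2)
      (fun _ _ => adjD_iff_interleaved hk2) (fun _ => partD_of_isPartitionSeq)
      (by simp [partD]) ?_
    simp [partD_of_succ_eq (show k - 1 + 1 = k by omega)]
  · have hk0 : 0 < k := by omega
    refine diam_eq_of_retract hk0 (fun _ => isPartitionSeq_partB_iff hk0)
      (fun _ _ => adjB_iff_interleaved hk0) (fun _ => partB_of_isPartitionSeq)
      (by simp [partB]) ?_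
    simp [partB_of_lt (show k - 1 < k by omega)]
end
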